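/- Let an ellipse with semi-major axis a, semi-minor axis b, eccentricity e = √(a²−b²)/a, and a focus at the origin be parametrized by the eccentric anomaly u: x(u) = a(cos u − e), y(u) = b sin u, so that r(u) = |(x(u),y(u))| = a(1 − e cos u). Then for any u₁, u₂: (x(u₁)−x(u₂))² + (y(u₁)−y(u₂))² − (r(u₁) − r(u₂))² = 4b² sin²((u₂−u₁)/2). -/

import Mathlib

open Real

/-- For the eccentric-anomaly parametrization of a focal
ellipse, `(x(u₁)−x(u₂))² + (y(u₁)−y(u₂))² − (r(u₁)−r(u₂))² = 4b² sin²(Δu/2)`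
(the minor-axis Lambert identity). -/
theorem minor_axis_lambert_identity
    (a b e : ℝ) (hab : b < a) (hb : 0 < b)
    (he : e = Real.sqrt (a ^ 2 - b ^ 2) / a)
    (x y r : ℝ → ℝ)
    (hx : ∀ u, x u = a * (Real.cos u - e))
    (hy : ∀ u, y u = b * Real.sin u)
    (hr : ∀ u, r u = a * (1 - e * Real.cos u))
    (u₁ u₂ : ℝ) :
    (x u₁ - x u₂) ^ 2 + (y u₁ - y u₂) ^ 2 - (r u₁ - r u₂) ^ 2
      = 4 * b ^ 2 * Real.sin ((u₂ - u₁) / 2) ^ 2 := by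
  have ha : 0 < a := hb.trans hab
  have hnn : 0 ≤ a ^ 2 - b ^ 2 := by nlinarith
  have he2 : a ^ 2 * e ^ 2 = a ^ 2 - b ^ 2 := by
    rw [he]
    field_simp
    exact Real.sq_sqrt hnn

  have hsin : Real.sin ((u₂ - u₁) / 2) ^ 2 = (1 - Real.cos (u₂ - u₁)) / 2 := by
    rw [Real.sin_sq_eq_half_sub, mul_div_cancel₀ _ (two_ne_zero)]; ring
  rw [hx, hx, hy, hy, hr, hr, hsin, Real.cos_sub]
  have h1 := Real.sin_sq_add_cos_sq u₁
  have h2 := Real.sin_sq_add_cos_sq u₂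
  nlinarith [sq_nonneg (Real.cos u₁ - Real.cos u₂)]
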